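/- arXiv:2507.20359 — 4 statements merged into one kernel-verified Lean document; each statement's English description precedes it below -/
import Mathlib

section
/- Let A be a commutative ring and I, J ⊆ A two ideals with the same radical. Then the I-adic completion and the J-adic completion of any finitely generated A-module agree; more precisely, for every A-module M the natural maps induce an isomorphism between the (derived) I-completion and the (derived) J-completion of M. In particular, the completion functor at an ideal I depends only on the closed subset V(I) of Spec(A). -/
open Submodule

theorem AdicCompletion.transitionMap_mk {A : Type*} [CommRing A] (I : Ideal A)
    {M : Type*} [AddCommGroup M] [Module A M] {m n : ℕ} (hmn : m ≤ n) (y : M) :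
    AdicCompletion.transitionMap I M hmn (Submodule.Quotient.mk (p := (I ^ n • ⊤ : Submodule A M)) y) =
      Submodule.Quotient.mk (p := (I ^ m • ⊤ : Submodule A M)) y :=
  rfl

namespace AdicCompareAux

variable {A : Type*} [CommRing A] (I J : Ideal A)
variable (M : Type*) [AddCommGroup M] [Module A M]

/-- The kernel condition for lifting quotient maps. -/
theorem ker_le {c n : ℕ} (hc : I ^ (c * n) ≤ J ^ n) :
    (I ^ (c * n) • ⊤ : Submodule A M) ≤ LinearMap.ker (mkQ (J ^ n • ⊤ : Submodule A M)) := by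
  rw [ker_mkQ]
  exact smul_mono hc le_rfl

/-- Comparison map between adic completions when `I ^ (c * n) ≤ J ^ n` for all `n`. -/
noncomputable def compare (c : ℕ) (hc : ∀ n, I ^ (c * n) ≤ J ^ n) :
    AdicCompletion I M →ₗ[A] AdicCompletion J M where
  toFun x := ⟨fun n => liftQ _ (mkQ (J ^ n • ⊤ : Submodule A M)) (ker_le I J M (hc n))
      (x.val (c * n)), by
    intro m n hmn
    dsimp only
    obtain ⟨y, hy⟩ := Submodule.Quotient.mk_surjective _ (x.val (c * n))
    have hy' : x.val (c * m) = Submodule.Quotient.mk y := by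
      rw [← x.property (Nat.mul_le_mul_left c hmn), ← hy,
        AdicCompletion.transitionMap_mk]
    rw [← hy, hy', liftQ_apply, liftQ_apply, mkQ_apply, mkQ_apply,
      AdicCompletion.transitionMap_mk]⟩
  map_add' x y := by
    apply Subtype.ext
    funext n
    exact map_add _ _ _
  map_smul' r x := by
    apply Subtype.ext
    funext n
    exact map_smul _ r _

theorem compare_val (c : ℕ) (hc : ∀ n, I ^ (c * n) ≤ J ^ n) (x : AdicCompletion I M) (n : ℕ) :
    (compare I J M c hc x).val n =
      liftQ _ (mkQ (J ^ n • ⊤ : Submodule A M)) (ker_le I J M (hc n)) (x.val (c * n)) := rfl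

theorem compare_of (c : ℕ) (hc : ∀ n, I ^ (c * n) ≤ J ^ n) (m : M) :
    compare I J M c hc (AdicCompletion.of I M m) = AdicCompletion.of J M m := by
  apply Subtype.ext
  funext n
  rfl

theorem compare_compare (c d : ℕ) (hc1 : 1 ≤ c) (hd1 : 1 ≤ d)
    (hc : ∀ n, I ^ (c * n) ≤ J ^ n) (hd : ∀ n, J ^ (d * n) ≤ I ^ n)
    (x : AdicCompletion I M) :
    compare J I M d hd (compare I J M c hc x) = x := by
  apply Subtype.ext
  funext n
  obtain ⟨y, hy⟩ := Submodule.Quotient.mk_surjective _ (x.val (c * (d * n)))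
  have h1 : (compare I J M c hc x).val (d * n) =
      Submodule.Quotient.mk (p := (J ^ (d * n) • ⊤ : Submodule A M)) y := by
    rw [compare_val, ← hy, liftQ_apply, mkQ_apply]
  have h2 : (compare J I M d hd (compare I J M c hc x)).val n =
      Submodule.Quotient.mk (p := (I ^ n • ⊤ : Submodule A M)) y := by
    rw [compare_val, h1, liftQ_apply, mkQ_apply]
  have hn : n ≤ c * (d * n) := by
    calc n = 1 * (1 * n) := by ring
    _ ≤ c * (d * n) := Nat.mul_le_mul hc1 (Nat.mul_le_mul hd1 le_rfl)
  have h3 : x.val n = Submodule.Quotient.mk (p := (I ^ n • ⊤ : Submodule A M)) y := by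
    rw [← x.property hn, ← hy, AdicCompletion.transitionMap_mk]
  rw [h2, h3]

end AdicCompareAux

/-- If two ideals of a Noetherian commutative ring have the same radical, then the
`I`-adic and `J`-adic completions of any module agree, compatibly with the natural maps. -/
theorem completion_eq_of_radical_eq (A : Type*) [CommRing A] [IsNoetherianRing A]
    (I J : Ideal A) (h : I.radical = J.radical)
    (M : Type*) [AddCommGroup M] [Module A M] :
    ∃ e : AdicCompletion I M ≃ₗ[A] AdicCompletion J M,
      ∀ m : M, e (AdicCompletion.of I M m) = AdicCompletion.of J M m := by
  obtain ⟨c₀, hc₀⟩ := Ideal.exists_pow_le_of_le_radical_of_fg_radical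
    (h ▸ Ideal.le_radical : I ≤ J.radical) (IsNoetherian.noetherian _)
  obtain ⟨d₀, hd₀⟩ := Ideal.exists_pow_le_of_le_radical_of_fg_radical
    (h ▸ Ideal.le_radical : J ≤ I.radical) (IsNoetherian.noetherian _)
  set c := c₀ + 1
  set d := d₀ + 1
  have hcJ : I ^ c ≤ J := le_trans (Ideal.pow_le_pow_right (Nat.le_succ c₀)) hc₀
  have hdI : J ^ d ≤ I := le_trans (Ideal.pow_le_pow_right (Nat.le_succ d₀)) hd₀
  have hc : ∀ n, I ^ (c * n) ≤ J ^ n := fun n => by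
    rw [pow_mul]
    exact Ideal.pow_right_mono hcJ n
  have hd : ∀ n, J ^ (d * n) ≤ I ^ n := fun n => by
    rw [pow_mul]
    exact Ideal.pow_right_mono hdI n
  refine ⟨LinearEquiv.ofLinear (AdicCompareAux.compare I J M c hc)
      (AdicCompareAux.compare J I M d hd) ?_ ?_, ?_⟩
  · refine LinearMap.ext fun x => ?_
    exact AdicCompareAux.compare_compare J I M d c (Nat.succ_le_succ (Nat.zero_le _))
      (Nat.succ_le_succ (Nat.zero_le _)) hd hc x
  · refine LinearMap.ext fun x => ?_
    exact AdicCompareAux.compare_compare I J M c d (Nat.succ_le_succ (Nat.zero_le _))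
      (Nat.succ_le_succ (Nat.zero_le _)) hc hd x
  · intro m
    exact AdicCompareAux.compare_of I J M c hc m
end

section
/- Let C be a closed symmetric monoidal category. Then the identity of the unit object 1 is trace-class, and more generally an object x of C is dualizable if and only if id_x : x → x is trace-class. -/
open CategoryTheory MonoidalCategory MonoidalClosed

variable {C : Type*} [Category C] [MonoidalCategory C] [SymmetricCategory C] [MonoidalClosed C]

/-- The natural map `Hom(1, x^∨ ⊗ y) → Hom(x, y)`, where `x^∨ = [x, 1]` is the internal
dual. -/
noncomputable def fromDualTensor {x y : C} (g : 𝟙_ C ⟶ (ihom x).obj (𝟙_ C) ⊗ y) : x ⟶ y :=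
  (ρ_ x).inv ≫ (x ◁ g) ≫ (α_ x ((ihom x).obj (𝟙_ C)) y).inv ≫
    ((ihom.ev x).app (𝟙_ C) ▷ y) ≫ (λ_ y).hom

/-- A morphism is trace-class if it is in the image of `Hom(1, x^∨ ⊗ y) → Hom(x, y)`. -/
def TraceClass {x y : C} (f : x ⟶ y) : Prop :=
  ∃ g : 𝟙_ C ⟶ (ihom x).obj (𝟙_ C) ⊗ y, fromDualTensor g = f

section Aux

open BraidedCategory

set_option linter.unusedSectionVars false in
/-- Key braided coherence identity. -/
theorem keyK_aux (x y : C) :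
    (x ◁ (β_ x y).hom) ≫ (α_ x y x).inv ≫ ((β_ x y).hom ▷ x) =
      (β_ x (x ⊗ y)).hom ≫ (α_ x y x).hom ≫ (β_ x (y ⊗ x)).hom := by
  simp only [braiding_tensor_right_hom, Category.assoc, Iso.hom_inv_id_assoc]
  rw [yang_baxter_assoc]
  rw [← MonoidalCategory.whiskerLeft_comp_assoc, SymmetricCategory.symmetry]
  simp

set_option linter.unusedSectionVars false in
/-- Mirror key braided coherence identity. -/
theorem keyK2_aux (a b : C) :
    ((β_ a b).hom ▷ b) ≫ (α_ b a b).hom ≫ (b ◁ (β_ a b).hom) =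
      (β_ (a ⊗ b) b).hom ≫ (α_ b a b).inv ≫ (β_ (b ⊗ a) b).hom := by
  simp only [braiding_tensor_left_hom, Category.assoc, Iso.inv_hom_id_assoc, Iso.hom_inv_id_assoc]
  rw [← yang_baxter_assoc]
  simp only [Category.assoc, Iso.hom_inv_id_assoc, Iso.hom_inv_id, Category.comp_id]
  rw [← comp_whiskerRight_assoc, SymmetricCategory.symmetry]
  simp

set_option linter.unusedSectionVars false in
/-- Two evaluations to the unit can be performed in either order. -/
theorem swap_ev_aux {A : C} (a b : A ⟶ 𝟙_ C) :
    (a ▷ A) ≫ (λ_ A).hom ≫ b = (A ◁ b) ≫ (ρ_ A).hom ≫ a := by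
  rw [← leftUnitor_naturality, ← whisker_exchange_assoc, unitors_equal, rightUnitor_naturality]

set_option linter.unusedSectionVars false in
/-- Exchange lemma: the two ways of pairing up the strands agree. -/
theorem exch_aux (x D : C) (e : x ⊗ D ⟶ 𝟙_ C) (g : 𝟙_ C ⟶ D ⊗ x) :
    (x ◁ ((λ_ D).inv ≫ g ▷ D ≫ (α_ D x D).hom ≫ D ◁ e ≫ (ρ_ D).hom)) ≫ e =
    (((ρ_ x).inv ≫ x ◁ g ≫ (α_ x D x).inv ≫ e ▷ x ≫ (λ_ x).hom) ▷ D) ≫ e := by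
  have hρ : x ◁ (ρ_ D).hom = (α_ x D (𝟙_ C)).inv ≫ (ρ_ (x ⊗ D)).hom := by
    rw [rightUnitor_tensor_hom, Iso.inv_hom_id_assoc]
  simp only [MonoidalCategory.whiskerLeft_comp, comp_whiskerRight, Category.assoc]
  rw [hρ]
  simp only [Category.assoc]
  rw [associator_inv_naturality_right_assoc, ← swap_ev_aux]
  simp [whisker_assoc]

/-- Forward direction: a dualizable object has trace-class identity. -/
theorem traceClass_id_of_exactPairing (x y : C) (p : ExactPairing x y) : TraceClass (𝟙 x) := by
  refine ⟨η_ x y ≫ (β_ x y).hom ≫ (curry ((β_ x y).hom ≫ ε_ x y) ▷ x), ?_⟩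
  rw [fromDualTensor]
  simp only [MonoidalCategory.whiskerLeft_comp, Category.assoc]
  rw [associator_inv_naturality_middle_assoc, ← comp_whiskerRight_assoc, ← uncurry_eq,
    uncurry_curry, comp_whiskerRight]
  simp only [Category.assoc]
  slice_lhs 3 5 => rw [keyK_aux]
  simp only [Category.assoc]
  rw [braiding_naturality_right_assoc]
  slice_lhs 5 6 => rw [← braiding_naturality_right]
  rw [rightUnitor_inv_braiding_assoc]
  simp only [Category.assoc, braiding_leftUnitor]
  rw [ExactPairing.evaluation_coevaluation_assoc]
  simp

/-- Backward direction, core construction: an abstract pairing datum satisfying one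
triangle identity, such that maps into `D` are detected by `e`, gives an exact pairing. -/
noncomputable def exactPairingOfCore (x D : C) (e : x ⊗ D ⟶ 𝟙_ C) (g : 𝟙_ C ⟶ D ⊗ x)
    (hinj : ∀ {u v : D ⟶ D}, (x ◁ u) ≫ e = (x ◁ v) ≫ e → u = v)
    (h' : (ρ_ x).inv ≫ x ◁ g ≫ (α_ x D x).inv ≫ e ▷ x ≫ (λ_ x).hom = 𝟙 x) :
    ExactPairing x D := by
  have hcore : x ◁ g ≫ (α_ x D x).inv ≫ e ▷ x = (ρ_ x).hom ≫ (λ_ x).inv := by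
    rw [← cancel_epi (ρ_ x).inv, ← cancel_mono (λ_ x).hom]
    simpa using h'
  have score : (λ_ D).inv ≫ g ▷ D ≫ (α_ D x D).hom ≫ D ◁ e ≫ (ρ_ D).hom = 𝟙 D := by
    apply hinj
    calc (x ◁ ((λ_ D).inv ≫ g ▷ D ≫ (α_ D x D).hom ≫ D ◁ e ≫ (ρ_ D).hom)) ≫ e
        = (((ρ_ x).inv ≫ x ◁ g ≫ (α_ x D x).inv ≫ e ▷ x ≫ (λ_ x).hom) ▷ D) ≫ e :=
          exch_aux x D e g
      _ = (𝟙 x ▷ D) ≫ e := by rw [h']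
      _ = (x ◁ 𝟙 D) ≫ e := by simp
  have score' : g ▷ D ≫ (α_ D x D).hom ≫ D ◁ e = (λ_ D).hom ≫ (ρ_ D).inv := by
    rw [← cancel_epi (λ_ D).inv, ← cancel_mono (ρ_ D).hom]
    simpa using score
  exact
    { coevaluation' := g ≫ (β_ D x).hom
      evaluation' := (β_ D x).hom ≫ e
      coevaluation_evaluation' := by
        simp only [MonoidalCategory.whiskerLeft_comp, comp_whiskerRight, Category.assoc]
        slice_lhs 2 4 => rw [keyK_aux D x]
        simp only [Category.assoc]
        rw [braiding_naturality_right_assoc]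
        slice_lhs 4 5 => rw [← braiding_naturality_right]
        slice_lhs 2 4 => rw [score']
        simp
      evaluation_coevaluation' := by
        simp only [MonoidalCategory.whiskerLeft_comp, comp_whiskerRight, Category.assoc]
        slice_lhs 2 4 => rw [keyK2_aux D x]
        simp only [Category.assoc]
        rw [braiding_naturality_left_assoc]
        slice_lhs 4 5 => rw [← braiding_naturality_left]
        slice_lhs 2 4 => rw [hcore]
        simp }

/-- Backward direction: an object with trace-class identity is dualizable. -/
noncomputable def exactPairingOfTraceClassId (x : C)
    (g : 𝟙_ C ⟶ (ihom x).obj (𝟙_ C) ⊗ x) (h : fromDualTensor g = 𝟙 x) :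
    ExactPairing x ((ihom x).obj (𝟙_ C)) :=
  exactPairingOfCore x _ ((ihom.ev x).app (𝟙_ C)) g
    (fun {u v} huv => uncurry_injective (by rwa [uncurry_eq, uncurry_eq]))
    (by rw [← h, fromDualTensor])

end Aux

/-- The identity of the unit object is trace-class, and an object is dualizable if and
only if its identity morphism is trace-class. -/
theorem dualizable_iff_id_traceClass :
    TraceClass (𝟙 (𝟙_ C)) ∧
    ∀ x : C, (∃ y : C, Nonempty (ExactPairing x y)) ↔ TraceClass (𝟙 x) := by
  constructor
  · exact traceClass_id_of_exactPairing (𝟙_ C) (𝟙_ C) exactPairingUnit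
  · intro x
    constructor
    · rintro ⟨y, ⟨p⟩⟩
      exact traceClass_id_of_exactPairing x y p
    · rintro ⟨g, hg⟩
      exact ⟨_, ⟨exactPairingOfTraceClassId x g hg⟩⟩
end

section
/- Let R be a commutative ring object in a symmetric monoidal category C (or a commutative A-algebra) which is idempotent, i.e. the multiplication map R ⊗ R → R is an isomorphism. Then the forgetful functor from R-modules in C to C is fully faithful on the essential image of the base-change functor; equivalently, for R-modules M, N, the natural map Hom_R(M, N) → Hom_C(M, N) is a bijection. In particular, base change C → Mod_R is a localization. -/
/-!
An idempotent algebra `A → B` is an epimorphism of commutative rings, so every `B`-module `M`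
satisfies `B ⊗[A] M ≃ M` via `b ⊗ m ↦ b • m`. An `A`-linear `f : M → N` then factors as
`M ≃ B ⊗[A] M → N`, `m ↦ 1 ⊗ m ↦ f m`, where the second map `b ⊗ m ↦ b • f m` is `B`-linear;
hence `f` itself is `B`-linear.
-/

open TensorProduct

namespace LinearMap

variable {A : Type*} (B : Type*) {M N : Type*} [CommSemiring A] [CommSemiring B] [Algebra A B]
  [Algebra.IsEpi A B]
  [AddCommMonoid M] [Module A M] [Module B M] [IsScalarTower A B M]
  [AddCommMonoid N] [Module A N] [Module B N] [IsScalarTower A B N]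

noncomputable def extendScalarsOfIsEpi (f : M →ₗ[A] N) : M →ₗ[B] N :=
  AlgebraTensorModule.lift (toSpanSingleton B (M →ₗ[A] N) f) ∘ₗ
    (TensorProduct.lid' A B M).symm.toLinearMap

@[simp]
theorem restrictScalars_extendScalarsOfIsEpi (f : M →ₗ[A] N) :
    (f.extendScalarsOfIsEpi B).restrictScalars A = f := by
  ext m
  simp [extendScalarsOfIsEpi]

theorem restrictScalars_bijective_of_isEpi :
    Function.Bijective (restrictScalars A : (M →ₗ[B] N) → M →ₗ[A] N) :=
  ⟨restrictScalars_injective A,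
    fun f ↦ ⟨f.extendScalarsOfIsEpi B, restrictScalars_extendScalarsOfIsEpi B f⟩⟩

end LinearMap

/-- If `B` is an idempotent commutative `A`-algebra (the multiplication
`B ⊗[A] B → B` is an isomorphism), then for `B`-modules `M`, `N` the natural map
`Hom_B(M, N) → Hom_A(M, N)` is a bijection: the forgetful functor is fully faithful. -/
theorem forget_fullyFaithful_of_idempotent (A B : Type*) [CommRing A] [CommRing B]
    [Algebra A B] (hB : Function.Bijective (LinearMap.mul' A B))
    (M N : Type*) [AddCommGroup M] [Module A M] [Module B M] [IsScalarTower A B M]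
    [AddCommGroup N] [Module A N] [Module B N] [IsScalarTower A B N] :
    Function.Bijective (fun f : M →ₗ[B] N => (f.restrictScalars A : M →ₗ[A] N)) := by
  have : Algebra.IsEpi A B := ⟨hB.injective⟩
  exact LinearMap.restrictScalars_bijective_of_isEpi B
end

section
/- Let A be a Noetherian commutative ring, I ⊆ A an ideal, and M an A-module which is I-power torsion (every element of M is killed by some power of I). Then the derived I-completion of M is equivalent to M itself; in particular, for M = A/I, the derived (and classical) I-adic completion of A/I is A/I. -/
/-- If a module `M` over a Noetherian ring is killed by a power of `I` (in particular for
`M = A ⧸ I`), then the natural map to its `I`-adic completion is an isomorphism. -/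
theorem adicCompletion_of_torsion (A : Type*) [CommRing A] [IsNoetherianRing A]
    (I : Ideal A) (M : Type*) [AddCommGroup M] [Module A M]
    (n : ℕ) (hn : I ^ n • (⊤ : Submodule A M) = ⊥) :
    Function.Bijective (AdicCompletion.of I M) := by
  constructor
  · intro x y hxy
    have h := congrArg (fun f => (AdicCompletion.eval I M n) f) hxy
    simp only [AdicCompletion.eval_of] at h
    have : x - y ∈ (I ^ n • ⊤ : Submodule A M) :=
      (Submodule.Quotient.eq _).mp h
    rw [hn, Submodule.mem_bot, sub_eq_zero] at this
    exact this
  · intro f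
    obtain ⟨x, hx⟩ := Submodule.mkQ_surjective _ (f.val n)
    refine ⟨x, ?_⟩
    ext k
    obtain ⟨y, hy⟩ := Submodule.mkQ_surjective (I ^ (max n k) • ⊤ : Submodule A M)
      (f.val (max n k))
    have hk : AdicCompletion.transitionMap I M (le_max_right n k) (f.val (max n k)) = f.val k :=
      f.property _
    have hnn : AdicCompletion.transitionMap I M (le_max_left n k) (f.val (max n k)) = f.val n :=
      f.property _
    rw [← hy] at hk hnn
    simp only [Submodule.mkQ_apply, Submodule.mapQ_apply, LinearMap.id_apply] at hk hnn
    -- x = y since quotient by I^n•⊤ = ⊥ is injective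
    have hxyeq : x = y := by
      have : x - y ∈ (I ^ n • ⊤ : Submodule A M) :=
        (Submodule.Quotient.eq _).mp (hx.trans hnn.symm)
      rw [hn, Submodule.mem_bot, sub_eq_zero] at this
      exact this
    rw [AdicCompletion.of_apply, ← hk, hxyeq, Submodule.mkQ_apply]
end
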